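/- arXiv:2401.17094 — 7 statements merged into one kernel-verified Lean document; each statement's English description precedes it below -/
import Mathlib

section
/- Let n be a positive integer and a, b ∈ F_{2^n} with b ≠ 0. The cubic equation x³ + a·x + b = 0 has a unique solution in F_{2^n} if and only if Tr(a³/b² + 1) ≠ 0, where Tr denotes the absolute trace from F_{2^n} to F_2. -/
/-!
If the cubic has a root `r` in `F`, it factors as `(x + r) (x² + r x + r² + a)`, and `x = r w`
turns the quadratic factor into `w² + w = 1 + a / r²`. Since `b = r (r² + a)`, this right-hand
side differs from `a³ / b² + 1` by `z² + z` with `z = r² / (r² + a)`, so the quadratic factor has a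
root iff `w² + w = a³ / b² + 1` is solvable, i.e. (additive Hilbert 90) iff
`Tr (a³ / b² + 1) = 0`.

If the cubic has no root in `F`, it is irreducible, and in the cubic extension `E` it generates,
which is Galois, it has three distinct roots. The first case over `E` gives
`Tr_E (a³ / b² + 1) = 0`, and on `F` the trace of `E` is `3 • Tr_F = Tr_F`.
-/

open Polynomial Module

section CharTwo

variable {F : Type*} [Field F] [CharP F 2]

lemma exists_sq_add_self_eq_add_sq_add_self_iff (c z : F) :
    (∃ w, w ^ 2 + w = c + (z ^ 2 + z)) ↔ ∃ w, w ^ 2 + w = c := by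
  have h2 : (2 : F) = 0 := CharTwo.two_eq_zero
  constructor
  · rintro ⟨w, hw⟩
    exact ⟨w + z, by linear_combination hw + (w * z + z ^ 2 + z) * h2⟩
  · rintro ⟨w, hw⟩
    exact ⟨w + z, by linear_combination hw + (w * z) * h2⟩

lemma cubic_eq_mul_of_root {a b r : F} (hr : r ^ 3 + a * r + b = 0) (x : F) :
    x ^ 3 + a * x + b = (x + r) * (x ^ 2 + r * x + (r ^ 2 + a)) := by
  linear_combination hr - (r * x ^ 2 + r ^ 2 * x + r ^ 3 + a * r) * CharTwo.two_eq_zero (R := F)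

theorem existsUnique_cubic_root_iff_of_root {a b r : F} (hb : b ≠ 0)
    (hr : r ^ 3 + a * r + b = 0) :
    (∃! x, x ^ 3 + a * x + b = 0) ↔ ¬∃ w, w ^ 2 + w = a ^ 3 / b ^ 2 + 1 := by
  have h2 : (2 : F) = 0 := CharTwo.two_eq_zero
  have hb' : b = r * (r ^ 2 + a) := by linear_combination hr - (r ^ 3 + a * r) * h2
  have hr0 : r ≠ 0 := by rintro rfl; simp_all
  have hs0 : r ^ 2 + a ≠ 0 := by intro h; simp_all
  have hquad : (∃ x, x ^ 2 + r * x + (r ^ 2 + a) = 0) ↔ ∃ w, w ^ 2 + w = a ^ 3 / b ^ 2 + 1 := by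
    have hshift : (r ^ 2 + a) / r ^ 2
        = a ^ 3 / b ^ 2 + 1 + ((r ^ 2 / (r ^ 2 + a)) ^ 2 + r ^ 2 / (r ^ 2 + a)) := by
      rw [hb']
      field_simp
      linear_combination (r ^ 2 * a ^ 2 - r ^ 6) * h2
    calc (∃ x, x ^ 2 + r * x + (r ^ 2 + a) = 0) ↔ ∃ w, w ^ 2 + w = (r ^ 2 + a) / r ^ 2 := by
          constructor
          · rintro ⟨x, hx⟩
            exact ⟨x / r, by field_simp; linear_combination hx - (r ^ 2 + a) * h2⟩
          · rintro ⟨w, hw⟩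
            field_simp at hw
            exact ⟨r * w, by linear_combination hw + (r ^ 2 + a) * h2⟩
      _ ↔ _ := by rw [hshift, exists_sq_add_self_eq_add_sq_add_self_iff]
  rw [← hquad]
  constructor
  · rintro hu ⟨y, hy⟩
    have hyr : y = r := hu.unique (by rw [cubic_eq_mul_of_root hr, hy, mul_zero]) hr
    subst hyr
    exact hs0 (by linear_combination hy - y ^ 2 * h2)
  · intro hq
    refine ⟨r, hr, fun x (hx : x ^ 3 + a * x + b = 0) => ?_⟩
    rw [cubic_eq_mul_of_root hr] at hx
    rcases mul_eq_zero.mp hx with h | h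
    · linear_combination h - r * h2
    · exact absurd ⟨x, h⟩ hq

end CharTwo

section AdjoinRoot

variable {K : Type*} [Field K] [Finite K] (f : K[X]) [Fact (Irreducible f)]

instance AdjoinRoot.finite_of_irreducible : Finite (AdjoinRoot f) :=
  have := (AdjoinRoot.powerBasis (Fact.out : Irreducible f).ne_zero).finite
  Module.finite_of_finite K

lemma AdjoinRoot.card_rootSet_eq_natDegree :
    Fintype.card (f.rootSet (AdjoinRoot f)) = f.natDegree := by
  have hf : Irreducible f := Fact.out
  refine Polynomial.card_rootSet_eq_natDegree (PerfectField.separable_of_irreducible hf) ?_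
  have := Normal.splits (F := K) inferInstance (AdjoinRoot.root f)
  rw [AdjoinRoot.minpoly_root hf.ne_zero, Polynomial.map_mul] at this
  exact this.of_dvd (by simp [hf.ne_zero]) (dvd_mul_right _ _)

end AdjoinRoot

section Trace

variable {F : Type*} [Field F] [Finite F] [Algebra (ZMod 2) F]

lemma trace_sq (x : F) : Algebra.trace (ZMod 2) F (x ^ 2) = Algebra.trace (ZMod 2) F x := by
  simpa [ZMod.card] using
    Algebra.trace_eq_of_algEquiv (FiniteField.frobeniusAlgEquivOfAlgebraic (ZMod 2) F) x

lemma trace_sq_add_self (z : F) : Algebra.trace (ZMod 2) F (z ^ 2 + z) = 0 := by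
  rw [map_add, trace_sq, CharTwo.add_self_eq_zero]

theorem trace_eq_zero_iff_exists_sq_add_self (c : F) :
    Algebra.trace (ZMod 2) F c = 0 ↔ ∃ z, z ^ 2 + z = c := by
  have : CharP F 2 := charP_of_injective_algebraMap' (ZMod 2) 2
  let ψ : F →ₗ[ZMod 2] F := (FiniteField.frobeniusAlgHom (ZMod 2) F).toLinearMap + LinearMap.id
  have hψ (z : F) : ψ z = z ^ 2 + z := by simp [ψ, ZMod.card]
  -- `ker ψ = {0, 1}`, so `range ψ` has codimension one, like the kernel of the surjective trace.
  have hker : finrank (ZMod 2) (LinearMap.ker ψ) ≤ 1 := by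
    have : LinearMap.ker ψ ≤ Submodule.span (ZMod 2) {1} := by
      intro z hz
      rw [LinearMap.mem_ker, hψ] at hz
      rcases mul_eq_zero.mp (show z * (z + 1) = 0 by linear_combination hz) with h | h
      · simp [h]
      · rw [CharTwo.add_eq_zero.mp h]
        exact Submodule.mem_span_singleton_self 1
    exact (Submodule.finrank_mono this).trans (finrank_span_le_card _) |>.trans (by simp)
  have hrange : LinearMap.range ψ = LinearMap.ker (Algebra.trace (ZMod 2) F) := by
    refine Submodule.eq_of_le_of_finrank_le ?_ ?_
    · rintro _ ⟨z, rfl⟩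
      rw [LinearMap.mem_ker, hψ, trace_sq_add_self]
    · have hψ_rank := LinearMap.finrank_range_add_finrank_ker ψ
      have htr_rank := LinearMap.finrank_range_add_finrank_ker (Algebra.trace (ZMod 2) F)
      rw [LinearMap.range_eq_top.mpr (Algebra.trace_surjective (ZMod 2) F), finrank_top,
        finrank_self] at htr_rank
      omega
  rw [← LinearMap.mem_ker, ← hrange]
  simp [hψ]

lemma trace_algebraMap_of_odd_finrank {K E : Type*} [Field K] [Field E] [Finite E] [Algebra K E]
    [Algebra (ZMod 2) K] [Algebra (ZMod 2) E] [IsScalarTower (ZMod 2) K E]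
    (h : Odd (finrank K E)) (c : K) :
    Algebra.trace (ZMod 2) E (algebraMap K E c) = Algebra.trace (ZMod 2) K c := by
  have : Finite K := Finite.of_injective _ (algebraMap K E).injective
  have : CharP K 2 := charP_of_injective_algebraMap' (ZMod 2) 2
  obtain ⟨m, hm⟩ := h
  rw [← Algebra.trace_trace (S := K), Algebra.trace_algebraMap, hm, add_smul, one_smul, mul_comm,
    mul_smul, two_smul, CharTwo.add_self_eq_zero, smul_zero, zero_add]

theorem trace_eq_zero_of_forall_cubic_ne_zero {a b : F} (hb : b ≠ 0)
    (h : ∀ x, x ^ 3 + a * x + b ≠ 0) :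
    Algebra.trace (ZMod 2) F (a ^ 3 / b ^ 2 + 1) = 0 := by
  set f : F[X] := X ^ 3 + C a * X + C b with hf
  have hdeg : f.natDegree = 3 := by rw [hf]; compute_degree!
  have hirr : Irreducible f :=
    irreducible_of_degree_le_three_of_not_isRoot (by simp [hdeg]) (fun x => by simpa [f] using h x)
  have := Fact.mk hirr
  set E := AdjoinRoot f
  have : CharP E 2 := charP_of_injective_algebraMap' (ZMod 2) 2
  have hroot (x : E) :
      x ∈ f.rootSet E ↔ x ^ 3 + algebraMap F E a * x + algebraMap F E b = 0 := by
    simp [mem_rootSet, hirr.ne_zero, f]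
  have hr : AdjoinRoot.root f ∈ f.rootSet E :=
    mem_rootSet.mpr ⟨hirr.ne_zero, AdjoinRoot.aeval_eq f ▸ AdjoinRoot.mk_self⟩
  have hnotunique : ¬∃! x : E, x ^ 3 + algebraMap F E a * x + algebraMap F E b = 0 := by
    obtain ⟨⟨x, hx⟩, ⟨y, hy⟩, hxy⟩ := Fintype.one_lt_card_iff.mp
      (by rw [AdjoinRoot.card_rootSet_eq_natDegree f, hdeg]; norm_num)
    exact fun hu => hxy (Subtype.ext (hu.unique ((hroot x).mp hx) ((hroot y).mp hy)))
  have hodd : Odd (finrank F E) := by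
    rw [(AdjoinRoot.powerBasis hirr.ne_zero).finrank, AdjoinRoot.powerBasis_dim, hdeg]
    decide
  rw [← trace_algebraMap_of_odd_finrank hodd, trace_eq_zero_iff_exists_sq_add_self]
  simp only [map_add, map_div₀, map_pow, map_one]
  by_contra hno
  exact hnotunique ((existsUnique_cubic_root_iff_of_root ((_root_.map_ne_zero _).mpr hb)
    ((hroot _).mp hr)).mpr hno)

theorem existsUnique_cubic_root_iff_trace_ne_zero {a b : F} (hb : b ≠ 0) :
    (∃! x, x ^ 3 + a * x + b = 0) ↔ Algebra.trace (ZMod 2) F (a ^ 3 / b ^ 2 + 1) ≠ 0 := by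
  have : CharP F 2 := charP_of_injective_algebraMap' (ZMod 2) 2
  by_cases h : ∃ r, r ^ 3 + a * r + b = 0
  · obtain ⟨r, hr⟩ := h
    rw [existsUnique_cubic_root_iff_of_root hb hr, Ne, trace_eq_zero_iff_exists_sq_add_self]
  · simp only [not_exists] at h
    exact iff_of_false (fun hu => h _ hu.exists.choose_spec)
      (not_not.mpr (trace_eq_zero_of_forall_cubic_ne_zero hb h))

end Trace

theorem stmt_1_general (n : ℕ) (a b : GaloisField 2 n) (hb : b ≠ 0) :
    (∃! x : GaloisField 2 n, x ^ 3 + a * x + b = 0) ↔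
      Algebra.trace (ZMod 2) (GaloisField 2 n) (a ^ 3 / b ^ 2 + 1) ≠ 0 :=
  existsUnique_cubic_root_iff_trace_ne_zero hb

theorem stmt_1 (n : ℕ) (hn : 0 < n) (a b : GaloisField 2 n) (hb : b ≠ 0) :
    (∃! x : GaloisField 2 n, x ^ 3 + a * x + b = 0) ↔
      Algebra.trace (ZMod 2) (GaloisField 2 n) (a ^ 3 / b ^ 2 + 1) ≠ 0 :=
  stmt_1_general n a b hb
end

section
/- Let m be odd and q = 2^m. Define f(x,y,z) = x³ + x²y + xy² + x²z + yz² over F_q, and F : F_q³ → F_q³ by F(x,y,z) = (f(x,y,z), f(y,z,x), f(z,x,y)). Then F is a bijection of F_q³. -/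
def f4 {F : Type*} [Field F] (x y z : F) : F := x ^ 3 + x ^ 2 * y + x * y ^ 2 + x ^ 2 * z + y * z ^ 2

/-!
In characteristic 2 the map `Φ = cyclicMap` cubes the first two elementary symmetric functions:
`e₁ (Φ p) = e₁ p ^ 3` and `e₂ (Φ p) = e₂ p ^ 3`. Since `3` does not divide `2 ^ m - 1` for odd `m`,
`X ^ 2 + X + 1` has no root in `F`, so cubing is injective and `Φ p` determines `e₁ p` and `e₂ p`.
Given these, `p.1` is recovered from the linear relation
`(e₁⁴ + e₁² e₂ + e₂²) p.1 = e₁² (Φ p).1 + e₂ (Φ p).2.2 + e₁ e₂²`, whose coefficient vanishes only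
when `e₁ p = e₂ p = 0`, i.e. `p = 0`; the other coordinates follow since `Φ` commutes with rotation.
-/

section NoCubeRootOfUnity

variable {F : Type*} [Field F]

theorem eq_zero_of_sq_add_mul_add_sq_eq_zero (hF : ∀ r : F, r ^ 2 + r + 1 ≠ 0) {a b : F}
    (h : a ^ 2 + a * b + b ^ 2 = 0) : a = 0 ∧ b = 0 := by
  obtain rfl | hb := eq_or_ne b 0
  · simpa using h
  · refine absurd ?_ (hF (a / b))
    field_simp
    linear_combination h

theorem pow_three_injective (hF : ∀ r : F, r ^ 2 + r + 1 ≠ 0) :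
    Function.Injective fun x : F => x ^ 3 := by
  intro x y hxy
  have hfactor : (x - y) * (x ^ 2 + x * y + y ^ 2) = 0 := by linear_combination hxy
  rcases mul_eq_zero.mp hfactor with h | h
  · exact sub_eq_zero.mp h
  · obtain ⟨rfl, rfl⟩ := eq_zero_of_sq_add_mul_add_sq_eq_zero hF h
    rfl

theorem FiniteField.sq_add_self_add_one_ne_zero [Fintype F]
    (hcard : Nat.Coprime 3 (Fintype.card F - 1)) (h3 : (3 : F) ≠ 0) (r : F) :
    r ^ 2 + r + 1 ≠ 0 := by
  intro hr
  have hr0 : r ≠ 0 := by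
    rintro rfl
    simp at hr
  have hr3 : r ^ 3 = 1 := by linear_combination (r - 1) * hr
  have hr1 : r = 1 := by
    simpa [hcard] using pow_gcd_eq_one.mpr ⟨hr3, FiniteField.pow_card_sub_one_eq_one r hr0⟩
  subst hr1
  exact h3 (by linear_combination hr)

end NoCubeRootOfUnity

theorem Nat.coprime_three_two_pow_sub_one {m : ℕ} (hm : Odd m) : Nat.Coprime 3 (2 ^ m - 1) := by
  obtain ⟨k, rfl⟩ := hm
  rw [Nat.Prime.coprime_iff_not_dvd Nat.prime_three, pow_succ, pow_mul]
  have h4 : (2 ^ 2) ^ k % 3 = 1 := by simp [Nat.pow_mod]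
  omega

section CyclicMap

variable {F : Type*} [Field F]

def cyclicMap (p : F × F × F) : F × F × F :=
  (f4 p.1 p.2.1 p.2.2, f4 p.2.1 p.2.2 p.1, f4 p.2.2 p.1 p.2.1)

def rotate (p : F × F × F) : F × F × F := (p.2.1, p.2.2, p.1)

def e₁ (p : F × F × F) : F := p.1 + p.2.1 + p.2.2

def e₂ (p : F × F × F) : F := p.1 * p.2.1 + p.2.1 * p.2.2 + p.2.2 * p.1

theorem cyclicMap_rotate (p : F × F × F) : cyclicMap (rotate p) = rotate (cyclicMap p) := rfl

theorem fst_eq_zero_of_e₁_eq_zero_of_e₂_eq_zero (hF : ∀ r : F, r ^ 2 + r + 1 ≠ 0)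
    {p : F × F × F} (h₁ : e₁ p = 0) (h₂ : e₂ p = 0) : p.1 = 0 := by
  unfold e₁ e₂ at *
  exact (eq_zero_of_sq_add_mul_add_sq_eq_zero hF (b := p.2.1)
    (by linear_combination (p.1 + p.2.1) * h₁ - h₂)).1

variable [CharP F 2]

theorem e₁_cyclicMap (p : F × F × F) : e₁ (cyclicMap p) = e₁ p ^ 3 := by
  unfold e₁ cyclicMap f4
  grind

theorem e₂_cyclicMap (p : F × F × F) : e₂ (cyclicMap p) = e₂ p ^ 3 := by
  unfold e₂ cyclicMap f4
  grind

theorem mul_fst_eq_cyclicMap (p : F × F × F) :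
    (e₁ p ^ 4 + e₁ p ^ 2 * e₂ p + e₂ p ^ 2) * p.1 =
      e₁ p ^ 2 * (cyclicMap p).1 + e₂ p * (cyclicMap p).2.2 + e₁ p * e₂ p ^ 2 := by
  unfold e₁ e₂ cyclicMap f4
  grind

theorem fst_eq_of_cyclicMap_eq (hF : ∀ r : F, r ^ 2 + r + 1 ≠ 0) {p q : F × F × F}
    (h : cyclicMap p = cyclicMap q) : p.1 = q.1 := by
  have h₁ : e₁ p = e₁ q := pow_three_injective hF <| by
    simp only [← e₁_cyclicMap, h]
  have h₂ : e₂ p = e₂ q := pow_three_injective hF <| by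
    simp only [← e₂_cyclicMap, h]
  by_cases hD : e₁ p ^ 4 + e₁ p ^ 2 * e₂ p + e₂ p ^ 2 = 0
  · obtain ⟨hsq, he₂⟩ := eq_zero_of_sq_add_mul_add_sq_eq_zero hF (a := e₁ p ^ 2) (b := e₂ p)
      (by linear_combination hD)
    have he₁ : e₁ p = 0 := pow_eq_zero_iff two_ne_zero |>.mp hsq
    rw [fst_eq_zero_of_e₁_eq_zero_of_e₂_eq_zero hF he₁ he₂,
      fst_eq_zero_of_e₁_eq_zero_of_e₂_eq_zero hF (h₁ ▸ he₁) (h₂ ▸ he₂)]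
  · apply mul_left_cancel₀ hD
    rw [mul_fst_eq_cyclicMap, h₁, h₂, mul_fst_eq_cyclicMap q, h]

theorem cyclicMap_injective (hF : ∀ r : F, r ^ 2 + r + 1 ≠ 0) :
    Function.Injective (cyclicMap (F := F)) := by
  intro p q h
  have h' : cyclicMap (rotate p) = cyclicMap (rotate q) := by simp only [cyclicMap_rotate, h]
  have h'' : cyclicMap (rotate (rotate p)) = cyclicMap (rotate (rotate q)) := by
    simp only [cyclicMap_rotate, h]
  exact Prod.ext (fst_eq_of_cyclicMap_eq hF h)
    (Prod.ext (fst_eq_of_cyclicMap_eq hF h') (fst_eq_of_cyclicMap_eq hF h''))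

end CyclicMap

theorem stmt_4 (m : ℕ) (hm : Odd m) {F : Type*} [Field F] [Fintype F]
    (hF : Fintype.card F = 2 ^ m) :
    Function.Bijective (fun p : F × F × F =>
      (f4 p.1 p.2.1 p.2.2, f4 p.2.1 p.2.2 p.1, f4 p.2.2 p.1 p.2.1)) := by
  have : CharP F 2 := charP_of_card_eq_prime_pow hF
  have h3 : (3 : F) ≠ 0 := by grind
  have hcard : Nat.Coprime 3 (Fintype.card F - 1) := hF ▸ Nat.coprime_three_two_pow_sub_one hm
  exact (cyclicMap_injective (FiniteField.sq_add_self_add_one_ne_zero hcard h3)).bijective_of_finite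
end

section
/- Let m be odd and q = 2^m. Define f(x,y,z) = x³ + yz² + y²z over F_q, and F : F_q³ → F_q³ by F(x,y,z) = (f(x,y,z), f(y,z,x), f(z,x,y)). Then F is a bijection of F_q³. -/
/-!
Write `s = x + y + z`, `A = x + z`, `B = y + z` and `N(A, B) = A² + AB + B²`. In characteristic
two the sum of the three components of the map is `s³`, and the sums of the first and of the
second component with the third are `N(A, B) · A` and `N(A, B) · B`. Since `m` is odd, `3` is
prime to `2 ^ m - 1`, so cubing is injective on `F`; this recovers `s`. The form `N` is
anisotropic (a nontrivial zero would give distinct `A, B` with `A³ = B³`) and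
`N(N·A, N·B) = N³`, so cube injectivity recovers first `N(A, B)` and then `(A, B)`.
Together `s`, `A`, `B` determine `(x, y, z)`.
-/

def f5 {F : Type*} [Field F] (x y z : F) : F := x ^ 3 + y * z ^ 2 + y ^ 2 * z

theorem FiniteField.pow_injective_of_coprime {K : Type*} [Field K] [Fintype K] {n : ℕ}
    (hn : n ≠ 0) (h : n.Coprime (Fintype.card K - 1)) :
    Function.Injective (fun x : K => x ^ n) := by
  intro x y hxy
  simp only at hxy
  rcases eq_or_ne x 0 with rfl | hx
  · rw [zero_pow hn, eq_comm, pow_eq_zero_iff hn] at hxy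
    exact hxy.symm
  have hunit : (y / x) ^ n = 1 := by rw [div_pow, ← hxy, div_self (pow_ne_zero n hx)]
  have hy : y ≠ 0 := by rintro rfl; simp [zero_pow hn] at hunit
  have hone : (y / x) ^ (n.gcd (Fintype.card K - 1)) = 1 :=
    pow_gcd_eq_one.mpr ⟨hunit, FiniteField.pow_card_sub_one_eq_one _ (div_ne_zero hy hx)⟩
  rw [h, pow_one, div_eq_one_iff_eq hx] at hone
  exact hone.symm

section NormForm

variable {R : Type*} [CommRing R]

def normForm (a b : R) : R := a ^ 2 + a * b + b ^ 2

theorem normForm_mul_self (a b : R) :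
    normForm (normForm a b * a) (normForm a b * b) = normForm a b ^ 3 := by
  unfold normForm; ring

variable [IsDomain R]

theorem eq_zero_of_normForm_eq_zero (hcube : Function.Injective (fun x : R => x ^ 3))
    (h3 : (3 : R) ≠ 0) {a b : R} (h : normForm a b = 0) : a = 0 ∧ b = 0 := by
  unfold normForm at h
  have hab : a = b := hcube (by linear_combination (a - b) * h)
  subst hab
  have ha : 3 * a ^ 2 = 0 := by linear_combination h
  have ha0 : a = 0 := pow_eq_zero_iff two_ne_zero |>.mp ((mul_eq_zero.mp ha).resolve_left h3)
  exact ⟨ha0, ha0⟩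

theorem normForm_mul_injective (hcube : Function.Injective (fun x : R => x ^ 3))
    (h3 : (3 : R) ≠ 0) :
    Function.Injective (fun p : R × R => (normForm p.1 p.2 * p.1, normForm p.1 p.2 * p.2)) := by
  rintro ⟨a, b⟩ ⟨a', b'⟩ h
  simp only [Prod.mk.injEq] at h ⊢
  obtain ⟨ha, hb⟩ := h
  have hN : normForm a b = normForm a' b' :=
    hcube (by simp only; rw [← normForm_mul_self, ← normForm_mul_self, ha, hb])
  rcases eq_or_ne (normForm a b) 0 with hN0 | hN0
  · obtain ⟨rfl, rfl⟩ := eq_zero_of_normForm_eq_zero hcube h3 hN0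
    obtain ⟨rfl, rfl⟩ := eq_zero_of_normForm_eq_zero hcube h3 (hN ▸ hN0)
    exact ⟨rfl, rfl⟩
  · rw [← hN] at ha hb
    exact ⟨mul_left_cancel₀ hN0 ha, mul_left_cancel₀ hN0 hb⟩

end NormForm

section CharTwo

variable {F : Type*} [Field F] [CharP F 2] (x y z : F)

theorem f5_add_f5_add_f5 : f5 x y z + f5 y z x + f5 z x y = (x + y + z) ^ 3 := by
  unfold f5
  linear_combination
    -(3 * x * y * z + x * y ^ 2 + x * z ^ 2 + x ^ 2 * y + x ^ 2 * z + y * z ^ 2 + y ^ 2 * z)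
      * CharTwo.two_eq_zero (R := F)

theorem f5_add_f5_rotate : f5 x y z + f5 z x y = normForm (x + z) (y + z) * (x + z) := by
  unfold f5 normForm
  linear_combination
    -(2 * x * y * z + 3 * x * z ^ 2 + 2 * x ^ 2 * z + y * z ^ 2 + z ^ 3)
      * CharTwo.two_eq_zero (R := F)

theorem f5_rotate_add_f5 : f5 y z x + f5 z x y = normForm (x + z) (y + z) * (y + z) := by
  unfold f5 normForm
  linear_combination
    -(2 * x * y * z + 3 * y * z ^ 2 + 2 * y ^ 2 * z + x * z ^ 2 + z ^ 3)
      * CharTwo.two_eq_zero (R := F)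

end CharTwo

theorem stmt_5 (m : ℕ) (hm : Odd m) {F : Type*} [Field F] [Fintype F]
    (hF : Fintype.card F = 2 ^ m) :
    Function.Bijective (fun p : F × F × F =>
      (f5 p.1 p.2.1 p.2.2, f5 p.2.1 p.2.2 p.1, f5 p.2.2 p.1 p.2.1)) := by
  have : CharP F 2 := ringChar.of_eq <| FiniteField.even_card_iff_char_two.mpr <| by
    rw [hF, Nat.pow_mod]; simp [hm.pos.ne']
  have hcube : Function.Injective (fun x : F => x ^ 3) :=
    FiniteField.pow_injective_of_coprime three_ne_zero (hF ▸ Nat.coprime_three_two_pow_sub_one hm)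
  have hthree : (3 : F) ≠ 0 := by
    rw [show (3 : F) = 2 + 1 by norm_num, CharTwo.two_eq_zero, zero_add]
    exact one_ne_zero
  refine Finite.injective_iff_bijective.mp ?_
  rintro ⟨x, y, z⟩ ⟨x', y', z'⟩ h
  simp only [Prod.mk.injEq] at h ⊢
  obtain ⟨h1, h2, h3⟩ := h
  have hs : x + y + z = x' + y' + z' :=
    hcube (by simp only; rw [← f5_add_f5_add_f5, ← f5_add_f5_add_f5, h1, h2, h3])
  have hAB : (x + z, y + z) = (x' + z', y' + z') := normForm_mul_injective hcube hthree <| by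
    simp only [← f5_add_f5_rotate, ← f5_rotate_add_f5, h1, h2, h3]
  simp only [Prod.mk.injEq] at hAB
  obtain ⟨hA, hB⟩ := hAB
  exact ⟨by linear_combination hs - hB, by linear_combination hs - hA,
    by linear_combination hA + hB - hs⟩
end

section
/- Let m be odd and q = 2^m. Define f(x,y,z) = x³ + y³ + x²y + x²z + yz² over F_q, and F : F_q³ → F_q³ by F(x,y,z) = (f(x,y,z), f(y,z,x), f(z,x,y)). Then F is a bijection of F_q³. -/
/-!
Adjoin a primitive cube root of unity `ω` to `F`, obtaining `K = 𝔽_{q²}`, and let `σ` be the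
`q`-Frobenius of `K`; as `q ≡ 2 (mod 3)`, it swaps `ω` and `ω²`. With the Lagrange resolvent
`B = x + ω y + ω² z`, one has `σ B = x + ω² y + ω z`, and in characteristic two the
components `f₁, f₂, f₃` of the map satisfy
`ω² f₁ + f₂ + ω f₃ = B² σ(B) = B^(q+2)` and
`f₁ + f₂ + f₃ = (x+y+z)³ + ω² B³ + ω σ(B)³`.
Since `q² - 1 ≡ 3 (mod q + 2)` and `3` divides neither `q + 2` nor `q - 1`, the maps
`u ↦ u^(q+2)` on `K` and `t ↦ t³` on `F` are injective, so the first identity determines `B`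
and the second then determines `x + y + z`. These three quantities determine `(x, y, z)`.
-/

def f6 {F : Type*} [Field F] (x y z : F) : F := x ^ 3 + y ^ 3 + x ^ 2 * y + x ^ 2 * z + y * z ^ 2

open Function

theorem Nat.two_pow_mod_three_of_odd {m : ℕ} (hm : Odd m) : 2 ^ m % 3 = 2 := by
  obtain ⟨k, rfl⟩ := hm
  rw [pow_succ, pow_mul, Nat.mul_mod, Nat.pow_mod]
  norm_num

theorem Nat.coprime_sub_one_three_of_mod_three_eq_two {q : ℕ} (hq : q % 3 = 2) :
    (q - 1).Coprime 3 :=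
  ((Nat.Prime.coprime_iff_not_dvd Nat.prime_three).mpr (by omega)).symm

theorem Nat.three_dvd_sq_sub_one_of_mod_three_eq_two {q : ℕ} (hq : q % 3 = 2) :
    3 ∣ q ^ 2 - 1 :=
  (Nat.modEq_iff_dvd' (Nat.one_le_pow _ _ (by omega))).mp (by rw [Nat.ModEq, Nat.pow_mod, hq])

theorem Nat.coprime_sq_sub_one_add_two_of_mod_three_eq_two {q : ℕ} (hq : q % 3 = 2) :
    (q ^ 2 - 1).Coprime (q + 2) := by
  obtain ⟨k, rfl⟩ : ∃ k, q = 3 * k + 2 := ⟨q / 3, by omega⟩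
  rw [← Nat.isCoprime_iff_coprime]
  refine ⟨-(k + 1), 1 + 3 * k * (k + 1), ?_⟩
  rw [Nat.cast_sub (Nat.one_le_pow _ _ (by omega))]
  push_cast
  ring

theorem FiniteField.pow_injective_of_coprime_s6 {K : Type*} [Field K] [Finite K] {n : ℕ}
    (hn : n ≠ 0) (h : (Nat.card K - 1).Coprime n) : Injective (· ^ n : K → K) := by
  intro a b hab
  simp only at hab
  rcases eq_or_ne a 0 with rfl | ha
  · exact ((pow_eq_zero_iff hn).mp (hab.symm.trans (zero_pow hn))).symm
  rcases eq_or_ne b 0 with rfl | hb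
  · exact (pow_eq_zero_iff hn).mp (hab.trans (zero_pow hn))
  rw [← Nat.card_units] at h
  have hu : Units.mk0 a ha = Units.mk0 b hb :=
    (Nat.Coprime.pow_left_bijective h).injective (Units.ext (by simpa using hab))
  simpa using congrArg Units.val hu

theorem FiniteField.exists_sq_add_self_add_one_eq_zero {K : Type*} [Field K] [Finite K]
    (h : 3 ∣ Nat.card K - 1) : ∃ ω : K, ω ^ 2 + ω + 1 = 0 := by
  rw [← Nat.card_units] at h
  obtain ⟨g, hg⟩ := exists_prime_orderOf_dvd_card' 3 h
  have hg3 : (g : K) ^ 3 = 1 := by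
    rw [← Units.val_pow_eq_pow_val, ← hg, pow_orderOf_eq_one, Units.val_one]
  have hg1 : (g : K) - 1 ≠ 0 := by
    rw [sub_ne_zero, ne_eq, Units.val_eq_one, ← orderOf_eq_one_iff, hg]
    norm_num
  exact ⟨g, mul_left_cancel₀ hg1 (by linear_combination hg3)⟩

theorem map_f6 {F K : Type*} [Field F] [Field K] (φ : F →+* K) (x y z : F) :
    φ (f6 x y z) = f6 (φ x) (φ y) (φ z) := by
  simp only [f6, map_add, map_mul, map_pow]

def lagrangeResolvent {K : Type*} [CommRing K] (ω x y z : K) : K := x + ω * y + ω ^ 2 * z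

theorem map_lagrangeResolvent_of_map_eq_sq {K : Type*} [CommRing K] {ω : K}
    (hω : ω ^ 2 + ω + 1 = 0) (σ : K →+* K) (hσω : σ ω = ω ^ 2) {x y z : K}
    (hx : σ x = x) (hy : σ y = y) (hz : σ z = z) :
    σ (lagrangeResolvent ω x y z) = lagrangeResolvent ω x z y := by
  simp only [lagrangeResolvent, map_add, map_mul, map_pow, hσω, hx, hy, hz]
  linear_combination (ω ^ 2 - ω) * z * hω

section CharTwo

variable {K : Type*} [Field K] [CharP K 2] {ω : K}

theorem lagrangeResolvent_sq_mul (hω : ω ^ 2 + ω + 1 = 0) (x y z : K) :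
    lagrangeResolvent ω x y z ^ 2 * lagrangeResolvent ω x z y
      = ω ^ 2 * f6 x y z + f6 y z x + ω * f6 z x y := by
  unfold lagrangeResolvent f6
  grind

theorem f6_add_f6_add_f6 (hω : ω ^ 2 + ω + 1 = 0) (x y z : K) :
    f6 x y z + f6 y z x + f6 z x y
      = (x + y + z) ^ 3 + ω ^ 2 * lagrangeResolvent ω x y z ^ 3
        + ω * lagrangeResolvent ω x z y ^ 3 := by
  unfold lagrangeResolvent f6
  grind

theorem eq_of_lagrangeResolvent_eq (hω : ω ^ 2 + ω + 1 = 0) {x y z x' y' z' : K}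
    (hs : x + y + z = x' + y' + z')
    (hr : lagrangeResolvent ω x y z = lagrangeResolvent ω x' y' z')
    (hr' : lagrangeResolvent ω x z y = lagrangeResolvent ω x' z' y') :
    x = x' ∧ y = y' ∧ z = z' := by
  unfold lagrangeResolvent at hr hr'
  refine ⟨?_, ?_, ?_⟩ <;> grind

theorem f6_cyclic_injective {F : Type*} [Field F] [Algebra F K]
    (hω : ω ^ 2 + ω + 1 = 0) (σ : K →ₐ[F] K) (hσω : σ ω = ω ^ 2)
    (hσ : Injective fun u : K => u ^ 2 * σ u) (hcube : Injective fun t : F => t ^ 3) :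
    Injective (fun p : F × F × F =>
      (f6 p.1 p.2.1 p.2.2, f6 p.2.1 p.2.2 p.1, f6 p.2.2 p.1 p.2.1)) := by
  have hσR (u v w : F) : σ (lagrangeResolvent ω (algebraMap F K u) (algebraMap F K v)
      (algebraMap F K w)) = lagrangeResolvent ω (algebraMap F K u) (algebraMap F K w)
      (algebraMap F K v) :=
    map_lagrangeResolvent_of_map_eq_sq hω σ hσω (σ.commutes u) (σ.commutes v) (σ.commutes w)
  rintro ⟨x, y, z⟩ ⟨x', y', z'⟩ h
  simp only [Prod.mk.injEq] at h
  set a := algebraMap F K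
  obtain ⟨e₁, e₂, e₃⟩ : f6 (a x) (a y) (a z) = f6 (a x') (a y') (a z') ∧
      f6 (a y) (a z) (a x) = f6 (a y') (a z') (a x') ∧
      f6 (a z) (a x) (a y) = f6 (a z') (a x') (a y') := by
    simp only [← map_f6, h, and_self]
  have hR : lagrangeResolvent ω (a x) (a y) (a z) = lagrangeResolvent ω (a x') (a y') (a z') :=
    hσ <| by simp only [hσR, lagrangeResolvent_sq_mul hω, e₁, e₂, e₃]
  have hR' :
      lagrangeResolvent ω (a x) (a z) (a y) = lagrangeResolvent ω (a x') (a z') (a y') := by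
    rw [← hσR x y z, ← hσR x' y' z', hR]
  have hs : x + y + z = x' + y' + z' := by
    apply hcube
    apply a.injective
    have hsum := f6_add_f6_add_f6 hω (a x) (a y) (a z)
    rw [e₁, e₂, e₃, f6_add_f6_add_f6 hω, hR, hR'] at hsum
    simpa only [map_pow, map_add] using (add_right_cancel (add_right_cancel hsum)).symm
  obtain ⟨hx, hy, hz⟩ :=
    eq_of_lagrangeResolvent_eq hω (by simpa only [map_add] using congrArg a hs) hR hR'
  rw [a.injective hx, a.injective hy, a.injective hz]

end CharTwo

theorem stmt_6 (m : ℕ) (hm : Odd m) {F : Type*} [Field F] [Fintype F]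
    (hF : Fintype.card F = 2 ^ m) :
    Function.Bijective (fun p : F × F × F =>
      (f6 p.1 p.2.1 p.2.2, f6 p.2.1 p.2.2 p.1, f6 p.2.2 p.1 p.2.1)) := by
  have hq : Nat.card F % 3 = 2 := by
    rw [Nat.card_eq_fintype_card, hF, Nat.two_pow_mod_three_of_odd hm]
  have : CharP F 2 := ringChar.of_eq <| FiniteField.even_card_iff_char_two.mpr <| by
    rw [hF]
    exact Nat.mod_eq_zero_of_dvd (dvd_pow_self 2 hm.pos.ne')
  let K := FiniteField.Extension F 2 2
  have : CharP K 2 := charP_of_injective_algebraMap (algebraMap F K).injective 2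
  have hK : Nat.card K = Nat.card F ^ 2 := FiniteField.natCard_extension F 2 2
  obtain ⟨ω, hω⟩ := FiniteField.exists_sq_add_self_add_one_eq_zero (K := K)
    (hK ▸ Nat.three_dvd_sq_sub_one_of_mod_three_eq_two hq)
  let σ := FiniteField.Extension.frob F 2 2
  have hσ (u : K) : σ.toAlgHom u = u ^ Nat.card F := FiniteField.Extension.frob_apply F 2 2
  refine Finite.injective_iff_bijective.mp <| f6_cyclic_injective hω σ.toAlgHom ?_ ?_ ?_
  · rw [hσ, pow_eq_pow_mod _ (by linear_combination (ω - 1) * hω : ω ^ 3 = 1), hq]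
  · have hpow : (fun u : K => u ^ 2 * σ.toAlgHom u) = (· ^ (Nat.card F + 2)) := by
      ext u
      rw [hσ, pow_add, mul_comm]
    rw [hpow]
    exact FiniteField.pow_injective_of_coprime_s6 (by omega)
      (hK ▸ Nat.coprime_sq_sub_one_add_two_of_mod_three_eq_two hq)
  · exact FiniteField.pow_injective_of_coprime_s6 three_ne_zero
      (Nat.coprime_sub_one_three_of_mod_three_eq_two hq)
end

section
/- Let m be odd and q = 2^m. Define f(x,y,z) = x³ + x²y + xy² + x²z + xz² over F_q, and F : F_q³ → F_q³ by F(x,y,z) = (f(x,y,z), f(y,z,x), f(z,x,y)). Then F is a bijection of F_q³. -/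
/-!
In characteristic 2, `f7 x y z = s ^ 3 + (y + z) ^ 3` with `s = x + y + z`. Hence if the map
agrees at `(x, y, z)` and `(a, b, c)`, then for `X = y + z`, `Y = z + x` (so `X + Y = x + y`) and
`A = b + c`, `B = c + a` the three sums `X ^ 3 + A ^ 3`, `Y ^ 3 + B ^ 3`, `(X + Y) ^ 3 + (A + B) ^ 3`
all equal `s ^ 3 + s' ^ 3`. As `3` does not divide `2 ^ m - 1`, cubing is injective on `F`, and
this forces `(X, Y) = (A, B)` and then `s = s'`.
-/

def f7 {F : Type*} [Field F] (x y z : F) : F := x ^ 3 + x ^ 2 * y + x * y ^ 2 + x ^ 2 * z + x * z ^ 2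

open Function

theorem Nat.coprime_two_pow_sub_one_three {m : ℕ} (hm : Odd m) : Nat.Coprime (2 ^ m - 1) 3 := by
  obtain ⟨k, rfl⟩ := hm
  have h4 : 2 ^ (2 * k + 1) % 3 = 2 := by
    rw [pow_succ, pow_mul, Nat.mul_mod, Nat.pow_mod]
    norm_num
  rw [Nat.coprime_comm, Nat.Prime.coprime_iff_not_dvd Nat.prime_three]
  generalize 2 ^ (2 * k + 1) = N at h4
  omega

theorem pow_left_injective_of_coprime_card_sub_one {G₀ : Type*} [GroupWithZero G₀] {n : ℕ}
    (hn : n ≠ 0) (hcop : (Nat.card G₀ - 1).Coprime n) : Injective fun a : G₀ => a ^ n := by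
  rw [← Nat.card_units] at hcop
  intro a b hab
  simp only at hab
  rcases eq_or_ne a 0 with rfl | ha
  · exact ((pow_eq_zero_iff hn).1 (hab.symm.trans (zero_pow hn))).symm
  rcases eq_or_ne b 0 with rfl | hb
  · exact (pow_eq_zero_iff hn).1 (hab.trans (zero_pow hn))
  have := hcop.pow_left_bijective.injective (a₁ := Units.mk0 a ha) (a₂ := Units.mk0 b hb)
    (Units.ext (by simpa using hab))
  simpa using congrArg Units.val this

section CharTwo

variable {R : Type*} [CommRing R] [IsDomain R] [CharP R 2]

theorem eq_zero_of_sq_add_mul_add_sq_eq_zero_s7 (hcube : Injective fun a : R => a ^ 3) {X Y : R}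
    (h : X ^ 2 + X * Y + Y ^ 2 = 0) : X = 0 ∧ Y = 0 := by
  have hXY : X = Y :=
    hcube (by linear_combination (norm := (ring_nf; reduce_mod_char!)) (X + Y) * h)
  subst hXY
  have hX : X ^ 2 = 0 := by linear_combination (norm := (ring_nf; reduce_mod_char!)) h
  exact ⟨pow_eq_zero_iff two_ne_zero |>.1 hX, pow_eq_zero_iff two_ne_zero |>.1 hX⟩

theorem eq_and_eq_of_add_cube_eq (hcube : Injective fun a : R => a ^ 3) {A B X Y : R}
    (h₁ : A ^ 3 + X ^ 3 = B ^ 3 + Y ^ 3) (h₂ : B ^ 3 + Y ^ 3 = (A + B) ^ 3 + (X + Y) ^ 3) :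
    A = X ∧ B = Y := by
  -- In characteristic 2, `r ^ 3 = q * r + X * Y * (X + Y)` with `q = X ^ 2 + X * Y + Y ^ 2`
  -- for each `r ∈ {X, Y, X + Y}`, and likewise for `A, B`; comparing these relations gives:
  have hA : (A ^ 2 + A * B + B ^ 2) * A = (X ^ 2 + X * Y + Y ^ 2) * X := by
    linear_combination (norm := (ring_nf; reduce_mod_char!)) h₂
  have hB : (A ^ 2 + A * B + B ^ 2) * B = (X ^ 2 + X * Y + Y ^ 2) * Y := by
    linear_combination (norm := (ring_nf; reduce_mod_char!)) h₁ + h₂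
  set p := A ^ 2 + A * B + B ^ 2
  set q := X ^ 2 + X * Y + Y ^ 2
  have hpq : p = q :=
    hcube (by linear_combination (p * A + q * X + q * Y) * hA + (p * A + p * B + q * Y) * hB)
  rcases eq_or_ne q 0 with hq | hq
  · obtain ⟨rfl, rfl⟩ := eq_zero_of_sq_add_mul_add_sq_eq_zero_s7 hcube hq
    obtain ⟨rfl, rfl⟩ := eq_zero_of_sq_add_mul_add_sq_eq_zero_s7 hcube (hpq.trans hq)
    exact ⟨rfl, rfl⟩
  · rw [hpq] at hA hB
    exact ⟨mul_left_cancel₀ hq hA, mul_left_cancel₀ hq hB⟩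

end CharTwo

theorem f7_eq_add_cube {F : Type*} [Field F] [CharP F 2] (x y z : F) :
    f7 x y z = (x + y + z) ^ 3 + (y + z) ^ 3 := by
  unfold f7
  linear_combination (norm := (ring_nf; reduce_mod_char!))

theorem stmt_7 (m : ℕ) (hm : Odd m) {F : Type*} [Field F] [Fintype F]
    (hF : Fintype.card F = 2 ^ m) :
    Function.Bijective (fun p : F × F × F =>
      (f7 p.1 p.2.1 p.2.2, f7 p.2.1 p.2.2 p.1, f7 p.2.2 p.1 p.2.1)) := by
  have hm0 : m ≠ 0 := by rintro rfl; simp at hm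
  have : CharP F 2 := CharTwo.of_one_ne_zero_of_two_eq_zero one_ne_zero <| by
    simpa [hF, hm0] using FiniteField.cast_card_eq_zero F
  have hcube : Injective fun a : F => a ^ 3 :=
    pow_left_injective_of_coprime_card_sub_one three_ne_zero <| by
      rw [Nat.card_eq_fintype_card, hF]
      exact Nat.coprime_two_pow_sub_one_three hm
  refine Finite.injective_iff_bijective.mp ?_
  rintro ⟨x, y, z⟩ ⟨a, b, c⟩ h
  simp only [Prod.mk.injEq, f7_eq_add_cube] at h ⊢
  obtain ⟨h₁, h₂, h₃⟩ := h
  obtain ⟨hX, hY⟩ := eq_and_eq_of_add_cube_eq (A := y + z) (B := z + x) (X := b + c) (Y := c + a)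
    hcube
    (by linear_combination (norm := (ring_nf; reduce_mod_char!)) h₁ - h₂)
    (by linear_combination (norm := (ring_nf; reduce_mod_char!)) h₂ - h₃)
  rw [hX, add_left_inj] at h₁
  have hs : x + y + z = a + b + c := hcube h₁
  exact ⟨by linear_combination hs - hX, by linear_combination hs - hY,
    by linear_combination hX + hY - hs⟩
end

section
/- Let m be an odd positive integer and let a, b, c ∈ F_{2^m} satisfy a² + ab + b² + bc + c² = 0. Then b = 0 and a = c. -/
/-!
In characteristic 2 the form is `(a + c)² + (a + c) b + b²`, so a solution with `b ≠ 0` gives a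
root `z = (a + c) / b` of `X² + X + 1`, i.e. a primitive cube root of unity. In a field of order
`2 ^ m` this forces `3 ∣ 2 ^ m - 1`, which fails for odd `m` since `2 ^ m ≡ 2 [MOD 3]`.
-/

open Polynomial

theorem three_dvd_card_sub_one_of_sq_add_self_add_one_eq_zero {F : Type*} [Field F] [Fintype F]
    (h3 : (3 : F) ≠ 0) {z : F} (hz : z ^ 2 + z + 1 = 0) : 3 ∣ Fintype.card F - 1 := by
  have : NeZero ((3 : ℕ) : F) := ⟨by exact_mod_cast h3⟩
  have hprim : IsPrimitiveRoot z 3 :=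
    isRoot_cyclotomic_iff.mp (by simp [cyclotomic_three, hz])
  exact (hprim.pow_eq_one_iff_dvd _).mp
    (FiniteField.pow_card_sub_one_eq_one z (hprim.ne_zero (by norm_num)))

theorem Nat.not_three_dvd_two_pow_sub_one {m : ℕ} (hm : Odd m) : ¬ 3 ∣ 2 ^ m - 1 := by
  obtain ⟨k, rfl⟩ := hm
  have h4 : 4 ^ k % 3 = 1 := by rw [Nat.pow_mod]; simp
  have h1 : 1 ≤ 4 ^ k := Nat.one_le_pow _ _ (by norm_num)
  rw [show 2 ^ (2 * k + 1) = 4 ^ k * 2 by rw [pow_succ, pow_mul]; norm_num]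
  omega

theorem FiniteField.two_eq_zero_of_card_eq_two_pow {F : Type*} [Field F] [Fintype F] {m : ℕ}
    (hm : m ≠ 0) (hF : Fintype.card F = 2 ^ m) : (2 : F) = 0 := by
  have hcard := FiniteField.cast_card_eq_zero F
  rw [hF, Nat.cast_pow, Nat.cast_ofNat] at hcard
  exact pow_eq_zero_iff hm |>.mp hcard

theorem sq_add_self_add_one_ne_zero_of_card_eq_two_pow {F : Type*} [Field F] [Fintype F]
    {m : ℕ} (hm : Odd m) (hF : Fintype.card F = 2 ^ m) (z : F) : z ^ 2 + z + 1 ≠ 0 := by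
  have h2 : (2 : F) = 0 := FiniteField.two_eq_zero_of_card_eq_two_pow hm.pos.ne' hF
  have h3 : (3 : F) ≠ 0 := by
    rw [show (3 : F) = 2 + 1 by norm_num, h2, zero_add]
    exact one_ne_zero
  intro hz
  exact Nat.not_three_dvd_two_pow_sub_one hm
    (hF ▸ three_dvd_card_sub_one_of_sq_add_self_add_one_eq_zero h3 hz)

theorem eq_zero_of_sq_add_mul_add_sq_eq_zero_s10 {F : Type*} [Field F]
    (hroot : ∀ z : F, z ^ 2 + z + 1 ≠ 0) {x y : F} (h : x ^ 2 + x * y + y ^ 2 = 0) :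
    x = 0 ∧ y = 0 := by
  have hy : y = 0 := by
    by_contra hy
    apply hroot (x / y)
    field_simp
    linear_combination h
  subst hy
  exact ⟨pow_eq_zero_iff two_ne_zero |>.mp (by simpa using h), rfl⟩

theorem CharTwo.eq_zero_and_eq_of_sq_add_mul_add_sq_add_mul_add_sq_eq_zero {F : Type*} [Field F]
    [CharP F 2] (hroot : ∀ z : F, z ^ 2 + z + 1 ≠ 0) {a b c : F}
    (h : a ^ 2 + a * b + b ^ 2 + b * c + c ^ 2 = 0) : b = 0 ∧ a = c := by
  have hform : (a + c) ^ 2 + (a + c) * b + b ^ 2 = 0 := by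
    rw [CharTwo.add_sq]
    linear_combination h
  obtain ⟨hac, hb⟩ := eq_zero_of_sq_add_mul_add_sq_eq_zero_s10 hroot hform
  exact ⟨hb, CharTwo.add_eq_zero.mp hac⟩

theorem stmt_10 (m : ℕ) (hm : Odd m) {F : Type*} [Field F] [Fintype F]
    (hF : Fintype.card F = 2 ^ m) (a b c : F)
    (h : a ^ 2 + a * b + b ^ 2 + b * c + c ^ 2 = 0) :
    b = 0 ∧ a = c := by
  have : CharP F 2 := CharTwo.of_one_ne_zero_of_two_eq_zero one_ne_zero
    (FiniteField.two_eq_zero_of_card_eq_two_pow hm.pos.ne' hF)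
  exact CharTwo.eq_zero_and_eq_of_sq_add_mul_add_sq_add_mul_add_sq_eq_zero
    (sq_add_self_add_one_ne_zero_of_card_eq_two_pow hm hF) h
end

section
/- Let m be odd and q = 2^m. Define H : F_q³ → F_q³ by H(x,y,z) = (x³ + y³, y³ + z³, xy² + yz² + x²z). Then H is a bijection of F_q³. -/
open Function

/-!
Write `H p = (A, B, C)`. In characteristic 2 the companion cubic `U = x²y + y²z + xz²` satisfies
`U³ = C³ + A²B + AB²`, and cubing is injective on `𝔽_q` because `3 ∤ q - 1` for odd `m`; hence
`U` is determined by `H p`. Three explicit identities `J_i(p) • p = G_i(A, B, C, U)`, with `J_i`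
quintic forms, then recover `p` up to the scalar `J_i(p)`, and that scalar is pinned down by
`H (λ • p) = λ³ • H p`. If all three `J_i(p)` vanish, the identities force `H p = 0`, and `H`
has trivial kernel.
-/

theorem FiniteField.pow_injective_of_coprime_s18 {F : Type*} [Field F] [Fintype F] {n : ℕ}
    (hn : n ≠ 0) (hcop : (Fintype.card F - 1).Coprime n) : Injective (· ^ n : F → F) := by
  intro a b hab
  simp only at hab
  by_cases ha : a = 0
  · rw [ha, zero_pow hn, eq_comm, pow_eq_zero_iff hn] at hab
    rw [ha, hab]
  have hb : b ≠ 0 := by rintro rfl; exact ha (pow_eq_zero_iff hn |>.mp (hab.trans (zero_pow hn)))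
  have hcopU : (Nat.card Fˣ).Coprime n := by rwa [Nat.card_units, Nat.card_eq_fintype_card]
  have := hcopU.pow_left_bijective.injective (a₁ := Units.mk0 a ha) (a₂ := Units.mk0 b hb)
    (Units.ext (by simpa using hab))
  simpa using congrArg Units.val this

theorem Nat.two_pow_sub_one_coprime_three {m : ℕ} (hm : Odd m) : (2 ^ m - 1).Coprime 3 := by
  have h : 2 ^ m % 3 = 2 := by
    obtain ⟨k, rfl⟩ := hm
    rw [pow_succ, pow_mul, Nat.mul_mod, Nat.pow_mod]
    norm_num
  refine Nat.Coprime.symm ((Nat.Prime.coprime_iff_not_dvd Nat.prime_three).2 ?_)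
  have := Nat.one_le_two_pow (n := m)
  omega

section CubicMap

variable {R : Type*} [CommRing R]

def cubicMap (p : R × R × R) : R × R × R :=
  (p.1 ^ 3 + p.2.1 ^ 3, p.2.1 ^ 3 + p.2.2 ^ 3,
    p.1 * p.2.1 ^ 2 + p.2.1 * p.2.2 ^ 2 + p.1 ^ 2 * p.2.2)

def cubicMapCompanion : R × R × R → R
  | (x, y, z) => x ^ 2 * y + y ^ 2 * z + x * z ^ 2

def cubicMapInvDen (i : Fin 3) : R × R × R → R
  | (x, y, z) =>
    let s := x ^ 3 + y ^ 3 + z ^ 3 + x * y * z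
    ![y ^ 5 + x * z * s, x ^ 5 + y * z * s, z ^ 5 + x * y * s] i

def cubicMapInvNum (i : Fin 3) : R × R × R → R → R × R × R
  | (a, b, c), u =>
    ![(u ^ 2 + a * c, c * u + a * b, c ^ 2 + b * u),
      (c * u + a * b + a ^ 2, c ^ 2 + a * u, u ^ 2 + b * c + a * c),
      (c ^ 2 + b * u + a * u, u ^ 2 + b * c, c * u + b ^ 2 + a * b)] i

theorem cubicMap_smul (a : R) (p : R × R × R) : cubicMap (a • p) = a ^ 3 • cubicMap p := by
  obtain ⟨x, y, z⟩ := p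
  simp only [cubicMap, Prod.smul_mk, smul_eq_mul, Prod.mk.injEq]
  refine ⟨?_, ?_, ?_⟩ <;> ring

variable [CharP R 2]

theorem cubicMapCompanion_pow_three (p : R × R × R) :
    cubicMapCompanion p ^ 3 = (cubicMap p).2.2 ^ 3 + (cubicMap p).1 ^ 2 * (cubicMap p).2.1
      + (cubicMap p).1 * (cubicMap p).2.1 ^ 2 := by
  obtain ⟨x, y, z⟩ := p
  simp only [cubicMapCompanion, cubicMap]
  grind

theorem cubicMapInvDen_smul (i : Fin 3) (p : R × R × R) :
    cubicMapInvDen i p • p = cubicMapInvNum i (cubicMap p) (cubicMapCompanion p) := by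
  obtain ⟨x, y, z⟩ := p
  fin_cases i <;> ext <;>
    simp only [cubicMapInvDen, cubicMapInvNum, cubicMap, cubicMapCompanion, Fin.zero_eta,
      Fin.mk_one, Fin.reduceFinMk, Matrix.cons_val, Prod.smul_mk, smul_eq_mul] <;> grind

theorem eq_zero_of_forall_cubicMapInvNum_eq_zero [IsReduced R] {h : R × R × R} {u : R}
    (hnum : ∀ i, cubicMapInvNum i h u = 0) : h = 0 := by
  obtain ⟨a, b, c⟩ := h
  have e0 := hnum 0
  have e1 := hnum 1
  have e2 := hnum 2
  simp only [cubicMapInvNum, Matrix.cons_val, Prod.mk_eq_zero] at e0 e1 e2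
  have ha : a = 0 := IsReduced.eq_zero a ⟨2, by grind⟩
  have hu : u = 0 := IsReduced.eq_zero u ⟨2, by grind⟩
  have hc : c = 0 := IsReduced.eq_zero c ⟨2, by grind⟩
  have hb : b = 0 := IsReduced.eq_zero b ⟨2, by grind⟩
  rw [ha, hb, hc]
  rfl

section Field

variable {F : Type*} [Field F] [CharP F 2] (hcube : Injective (· ^ 3 : F → F))
include hcube

theorem cubicMap_eq_zero_iff {p : F × F × F} : cubicMap p = 0 ↔ p = 0 := by
  refine ⟨fun h => ?_, fun h => by simp [h, cubicMap]⟩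
  obtain ⟨x, y, z⟩ := p
  simp only [cubicMap, Prod.mk_eq_zero] at h ⊢
  obtain ⟨hxy, hyz, hC⟩ := h
  have hxy : x = y := hcube (CharTwo.add_eq_zero.mp hxy)
  have hyz : y = z := hcube (CharTwo.add_eq_zero.mp hyz)
  subst hxy hyz
  have hx : x = 0 := hcube (by grind)
  exact ⟨hx, hx, hx⟩

theorem eq_of_smul_eq_smul_of_cubicMap_eq {p p' : F × F × F} {a b : F} (hb : b ≠ 0)
    (hsmul : a • p = b • p') (hmap : cubicMap p = cubicMap p') : p = p' := by
  by_cases h0 : cubicMap p' = 0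
  · rw [(cubicMap_eq_zero_iff hcube).mp h0, (cubicMap_eq_zero_iff hcube).mp (hmap.trans h0)]
  have hab : a ^ 3 = b ^ 3 := by
    have := congrArg cubicMap hsmul
    rw [cubicMap_smul, cubicMap_smul, hmap] at this
    exact smul_left_injective F h0 this
  rw [hcube hab] at hsmul
  exact smul_right_injective _ hb hsmul

theorem cubicMap_injective : Injective (cubicMap : F × F × F → F × F × F) := by
  intro p p' hmap
  have hU : cubicMapCompanion p = cubicMapCompanion p' :=
    hcube (by simp only [cubicMapCompanion_pow_three, hmap])
  by_cases hJ : ∀ i, cubicMapInvDen i p' = 0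
  · have h0 : cubicMap p' = 0 :=
      eq_zero_of_forall_cubicMapInvNum_eq_zero (u := cubicMapCompanion p') fun i => by
        rw [← cubicMapInvDen_smul, hJ i, zero_smul]
    rw [(cubicMap_eq_zero_iff hcube).mp h0, (cubicMap_eq_zero_iff hcube).mp (hmap.trans h0)]
  obtain ⟨i, hi⟩ := not_forall.mp hJ
  exact eq_of_smul_eq_smul_of_cubicMap_eq hcube hi
    (by rw [cubicMapInvDen_smul, cubicMapInvDen_smul, hmap, hU]) hmap

end Field

end CubicMap

theorem stmt_18 (m : ℕ) (hm : Odd m) {F : Type*} [Field F] [Fintype F]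
    (hF : Fintype.card F = 2 ^ m) :
    Function.Bijective (fun p : F × F × F =>
      (p.1 ^ 3 + p.2.1 ^ 3, p.2.1 ^ 3 + p.2.2 ^ 3,
        p.1 * p.2.1 ^ 2 + p.2.1 * p.2.2 ^ 2 + p.1 ^ 2 * p.2.2)) := by
  have : CharP F 2 := charP_of_card_eq_prime_pow hF
  have hcube : Injective (· ^ 3 : F → F) :=
    FiniteField.pow_injective_of_coprime_s18 three_ne_zero
      (hF ▸ Nat.two_pow_sub_one_coprime_three hm)
  exact Finite.injective_iff_bijective.mp (cubicMap_injective hcube)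
end
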